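/- For every real number C there exists a finite edge set E, with all edge lengths equal to 1, such that the maximal stabilization time over all DP-systems on metric graphs assembled from E exceeds by more than C the stabilization time of every DP-system on a linear metric graph (a path graph: connected, acyclic, all vertex degrees at most two) assembled from E. -/

import Mathlib

/-!
Common framework: metric multigraphs assembled from an edge set `E`
(`ends : E → Sym2 V` with distinct endpoints), walks, dynamic-point
systems, stabilization times, and structural graph notions.
-/

/-- Walks in a multigraph on vertices `V` with edge set `E` and endpoint map `ends`:
an alternating sequence of vertices and edges. -/
inductive MGWalk {E V : Type} (ends : E → Sym2 V) : V → V → Type where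
  | nil (a : V) : MGWalk ends a a
  | cons {a b c : V} (e : E) (h : ends e = s(a, b)) (tail : MGWalk ends b c) :
      MGWalk ends a c

namespace MGWalk

variable {E V : Type} {ends : E → Sym2 V}

/-- Length of a walk with respect to an edge-length function. -/
def length (l : E → ℝ) : ∀ {a b : V}, MGWalk ends a b → ℝ
  | _, _, nil _ => 0
  | _, _, cons e _ tail => l e + tail.length l

/-- The list of edge entries of a walk. -/
def edges : ∀ {a b : V}, MGWalk ends a b → List E
  | _, _, nil _ => []
  | _, _, cons e _ tail => e :: tail.edges

end MGWalk

/-- A DP-system on a metric graph assembled from `E`: the vertex set is finite,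
no edge is a loop, the multigraph is connected, and the set of initial vertices
is nonempty. -/
def IsDPSystem {E V : Type} (ends : E → Sym2 V) (S : Set V) : Prop :=
  Finite V ∧ (∀ e, ¬ (ends e).IsDiag) ∧ (∀ a b : V, Nonempty (MGWalk ends a b)) ∧
    S.Nonempty

/-- A dynamic point is present at time `t` at distance `s` from endpoint `x` of
edge `e` (on the arc leaving `x`) iff some walk from an initial vertex to `x`
has length `t - s`. -/
def IsPoint {E V : Type} (ends : E → Sym2 V) (l : E → ℝ) (S : Set V)
    (t : ℝ) (e : E) (x : V) (s : ℝ) : Prop :=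
  x ∈ ends e ∧ 0 ≤ s ∧ s < l e ∧
    ∃ v₀ ∈ S, ∃ w : MGWalk ends v₀ x, w.length l = t - s

/-- Number of dynamic points on edge `e` at time `t`. -/
noncomputable def NptsEdge {E V : Type} (ends : E → Sym2 V) (l : E → ℝ)
    (S : Set V) (e : E) (t : ℝ) : ℕ :=
  Set.ncard {p : V × ℝ | IsPoint ends l S t e p.1 p.2}

/-- Total number of dynamic points at time `t`. -/
noncomputable def Npts {E V : Type} (ends : E → Sym2 V) (l : E → ℝ)
    (S : Set V) (t : ℝ) : ℕ :=
  Set.ncard {p : E × V × ℝ | IsPoint ends l S t p.1 p.2.1 p.2.2}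

/-- `T` is a stabilization bound: `T ≥ 0` and the total number of points is
constant from `T` on. -/
def IsStabBound {E V : Type} (ends : E → Sym2 V) (l : E → ℝ) (S : Set V)
    (T : ℝ) : Prop :=
  0 ≤ T ∧ ∀ t ≥ T, Npts ends l S t = Npts ends l S T

/-- The stabilization time: the least stabilization bound. -/
noncomputable def stabTime {E V : Type} (ends : E → Sym2 V) (l : E → ℝ)
    (S : Set V) : ℝ :=
  sInf {T : ℝ | IsStabBound ends l S T}

/-- `T` is a stabilization bound for edge `e`. -/
def IsEdgeStabBound {E V : Type} (ends : E → Sym2 V) (l : E → ℝ) (S : Set V)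
    (e : E) (T : ℝ) : Prop :=
  0 ≤ T ∧ ∀ t ≥ T, NptsEdge ends l S e t = NptsEdge ends l S e T

/-- The stabilization time of edge `e`. -/
noncomputable def edgeStabTime {E V : Type} (ends : E → Sym2 V) (l : E → ℝ)
    (S : Set V) (e : E) : ℝ :=
  sInf {T : ℝ | IsEdgeStabBound ends l S e T}

/-- Membership in `LSTDP(E)` (given the underlying system is a DP-system):
its stabilization time is maximal among all DP-systems assembled from `E`. -/
def IsMaxStab {E : Type} (l : E → ℝ) {V : Type} (ends : E → Sym2 V)
    (S : Set V) : Prop :=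
  ∀ (V' : Type) (ends' : E → Sym2 V') (S' : Set V'),
    IsDPSystem ends' S' → stabTime ends' l S' ≤ stabTime ends l S

/-- Degree of vertex `x` in the subgraph with edge set `C`. -/
noncomputable def edgeDegree {E V : Type} (ends : E → Sym2 V) (C : Set E)
    (x : V) : ℕ :=
  Set.ncard {e ∈ C | x ∈ ends e}

/-- Degree of vertex `x` in the whole graph. -/
noncomputable def degree {E V : Type} (ends : E → Sym2 V) (x : V) : ℕ :=
  Set.ncard {e : E | x ∈ ends e}

/-- `x` is a vertex of the subgraph with edge set `C`. -/
def OnEdgeSet {E V : Type} (ends : E → Sym2 V) (C : Set E) (x : V) : Prop :=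
  ∃ e ∈ C, x ∈ ends e

/-- The subgraph with edge set `C` is connected. -/
def EdgeSetConn {E V : Type} (ends : E → Sym2 V) (C : Set E) : Prop :=
  ∀ a b : V, OnEdgeSet ends C a → OnEdgeSet ends C b →
    ∃ w : MGWalk ends a b, ∀ e ∈ w.edges, e ∈ C

/-- `C` is the edge set of a cycle: nonempty, connected, and every vertex of its
support has degree exactly two in it. -/
def IsCycleSet {E V : Type} (ends : E → Sym2 V) (C : Set E) : Prop :=
  C.Nonempty ∧ EdgeSetConn ends C ∧
    ∀ x : V, OnEdgeSet ends C x → edgeDegree ends C x = 2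

/-- A bead graph: no vertex lies on two distinct cycles. -/
def IsBead {E V : Type} (ends : E → Sym2 V) : Prop :=
  ∀ C₁ C₂ : Set E, IsCycleSet ends C₁ → IsCycleSet ends C₂ → C₁ ≠ C₂ →
    ∀ x : V, ¬ (OnEdgeSet ends C₁ x ∧ OnEdgeSet ends C₂ x)

/-- The graph has no cycles. -/
def IsAcyclicG {E V : Type} (ends : E → Sym2 V) : Prop :=
  ∀ C : Set E, ¬ IsCycleSet ends C

/-- `H` is the edge set of a path subgraph: nonempty, connected, acyclic, and
all degrees within `H` are at most two. -/
def IsPathSet {E V : Type} (ends : E → Sym2 V) (H : Set E) : Prop :=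
  H.Nonempty ∧ EdgeSetConn ends H ∧ (∀ C ⊆ H, ¬ IsCycleSet ends C) ∧
    ∀ x : V, edgeDegree ends H x ≤ 2

/-- `x` is a terminal vertex of the path subgraph `H`. -/
def IsHandleTerminal {E V : Type} (ends : E → Sym2 V) (H : Set E) (x : V) : Prop :=
  edgeDegree ends H x = 1

/-- The type `W(v, e)` of walks from `v` to an endpoint of edge `e`. -/
def WalkTo {E V : Type} (ends : E → Sym2 V) (v : V) (e : E) : Type :=
  { p : Σ x : V, MGWalk ends v x // p.1 ∈ ends e }

/-- The relation `≈` on `W(v, e)`: walks with the same final endpoint are related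
iff their lengths are congruent modulo `2·l(e)`; walks with different final
endpoints are related iff the difference of their lengths is congruent to
`l(e)` modulo `2·l(e)`. -/
def wapprox {E V : Type} (ends : E → Sym2 V) (l : E → ℝ) (v : V) (e : E)
    (w₁ w₂ : WalkTo ends v e) : Prop :=
  (w₁.1.1 = w₂.1.1 ∧
    ∃ k : ℤ, w₁.1.2.length l - w₂.1.2.length l = k * (2 * l e)) ∨
  (w₁.1.1 ≠ w₂.1.1 ∧
    ∃ k : ℤ, w₁.1.2.length l - w₂.1.2.length l - l e = k * (2 * l e))

/-!
With unit lengths, the points present at time `t` correspond to the incidences `(e, x)` such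
that `x` is reached from `S` by a walk with exactly `⌊t⌋` edges.

On a linear graph every closed walk has even length. Otherwise a closed walk with no
cancellable backtrack would exist, and with all degrees at most two its edges would form a
cycle. A shortest walk repeats no edge, and walks can be lengthened by `2` at any incidence.
So from time `|E|` on, the reached incidences are exactly those of the parity of `⌊t⌋`. Moving
an incidence to the other end of its edge changes the parity, and this is injective, so both
parities give the same count and `t_s ≤ |E|`.

The tadpole graph has `m + 3` unit edges: a path `0, …, m + 2` with a chord closing a triangle
at the far end, and the system starts at `0`. A closed walk of odd length at `0` has to go
around the triangle, so it has at least `2m + 3` edges. At time `2m + 1` the incidence of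
vertex `0` is therefore not reached, although every incidence is reached from time `3m + 5` on.
Hence `t_s ≥ 2m + 1`, which exceeds `|E| + C` once `m > C + 2`.
-/
namespace MGWalk

variable {E V : Type} {ends : E → Sym2 V}

def append : ∀ {a b c : V}, MGWalk ends a b → MGWalk ends b c → MGWalk ends a c
  | _, _, _, nil _, w => w
  | _, _, _, cons e h t, w => cons e h (t.append w)

def reverse : ∀ {a b : V}, MGWalk ends a b → MGWalk ends b a
  | _, _, nil a => nil a
  | _, _, cons e h t => t.reverse.append (cons e (h.trans Sym2.eq_swap) (nil _))

@[simp] theorem edges_nil (a : V) : (nil a : MGWalk ends a a).edges = [] := rfl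

@[simp] theorem edges_cons {a b c : V} (e : E) (h : ends e = s(a, b)) (t : MGWalk ends b c) :
    (cons e h t).edges = e :: t.edges := rfl

@[simp] theorem edges_append : ∀ {a b c : V} (w₁ : MGWalk ends a b) (w₂ : MGWalk ends b c),
    (w₁.append w₂).edges = w₁.edges ++ w₂.edges
  | _, _, _, nil _, _ => rfl
  | _, _, _, cons _ _ t, w => by simp [append, edges_append t w]

@[simp] theorem edges_reverse : ∀ {a b : V} (w : MGWalk ends a b),
    w.reverse.edges = w.edges.reverse
  | _, _, nil _ => rfl
  | _, _, cons _ _ t => by simp [reverse, edges_reverse t]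

theorem length_eq_length_edges {l : E → ℝ} (hl : ∀ e, l e = 1) :
    ∀ {a b : V} (w : MGWalk ends a b), w.length l = w.edges.length
  | _, _, nil _ => by simp [MGWalk.length]
  | _, _, cons e _ t => by
      simp [MGWalk.length, length_eq_length_edges hl t, hl e, add_comm]

theorem eq_of_edges_eq_nil : ∀ {a b : V} (w : MGWalk ends a b), w.edges = [] → a = b
  | _, _, nil _, _ => rfl
  | _, _, cons .., hw => by simp at hw

theorem exists_eq_append_cons_of_mem_edges : ∀ {a b : V} (w : MGWalk ends a b) {f : E},
    f ∈ w.edges → ∃ (x y : V) (w₁ : MGWalk ends a x) (w₂ : MGWalk ends y b),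
      ends f = s(x, y) ∧ w.edges = w₁.edges ++ f :: w₂.edges
  | _, _, nil _, _, hf => by simp at hf
  | a, _, cons e h t, f, hf => by
      by_cases hfe : f = e
      · subst hfe
        exact ⟨a, _, nil a, t, h, rfl⟩
      · obtain ⟨x, y, w₁, w₂, hxy, ht⟩ :=
          t.exists_eq_append_cons_of_mem_edges ((List.mem_cons.mp hf).resolve_left hfe)
        exact ⟨x, y, cons e h w₁, w₂, hxy, by simp [ht]⟩

theorem exists_eq_concat : ∀ {a b : V} (w : MGWalk ends a b), w.edges ≠ [] →
    ∃ (x : V) (e : E) (w' : MGWalk ends a x), ends e = s(x, b) ∧ w.edges = w'.edges ++ [e]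
  | _, _, nil _, hw => absurd rfl hw
  | a, _, cons e h (nil _), _ => ⟨a, e, nil a, h, rfl⟩
  | _, _, cons e h (cons e' h' t), _ => by
      obtain ⟨x, f, w', hf, hw'⟩ := (cons e' h' t).exists_eq_concat (by simp)
      exact ⟨x, f, cons e h w', hf, by simp [hw']⟩

theorem exists_walk_edges_subset_of_mem_ends {a b : V} (w : MGWalk ends a b) {f : E} {x : V}
    (hf : f ∈ w.edges) (hx : x ∈ ends f) : ∃ p : MGWalk ends a x, ∀ g ∈ p.edges, g ∈ w.edges := by
  obtain ⟨y, z, w₁, _, hyz, hw⟩ := w.exists_eq_append_cons_of_mem_edges hf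
  rw [hyz, Sym2.mem_iff] at hx
  rcases hx with rfl | rfl
  · exact ⟨w₁, fun g hg => by simp [hw, hg]⟩
  · refine ⟨w₁.append (cons f hyz (nil _)), fun g hg => ?_⟩
    simp only [edges_append, edges_cons, edges_nil, List.mem_append, List.mem_singleton] at hg
    rcases hg with hg | rfl
    · simp [hw, hg]
    · simp [hw]

theorem exists_ne_edges_mem_ends_of_isChain :
    ∀ {a b : V} (w : MGWalk ends a b), w.edges.IsChain (· ≠ ·) →
    ∀ {x : V} {f : E}, f ∈ w.edges → x ∈ ends f → x ≠ a → x ≠ b →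
      ∃ g₁ ∈ w.edges, ∃ g₂ ∈ w.edges, g₁ ≠ g₂ ∧ x ∈ ends g₁ ∧ x ∈ ends g₂
  | _, _, nil _, _, _, _, hf, _, _, _ => by simp at hf
  | _, _, @cons _ _ _ _ u _ e h t, hred, x, f, hf, hxf, hxa, hxb => by
      by_cases hxe : x ∈ ends e
      · have hxu : x = u := by
          rw [h, Sym2.mem_iff] at hxe
          exact hxe.resolve_left hxa
        subst hxu
        cases t with
        | nil => exact absurd rfl hxb
        | cons e₁ h₁ t₁ =>
          exact ⟨e, by simp, e₁, by simp, (List.isChain_cons_cons.mp hred).1, hxe,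
            by simp [h₁]⟩
      · have hft : f ∈ t.edges := (List.mem_cons.mp hf).resolve_left (by rintro rfl; exact hxe hxf)
        have hxu : x ≠ u := fun hxu => hxe (by simp [h, hxu])
        obtain ⟨g₁, hg₁, g₂, hg₂, hne, hx₁, hx₂⟩ :=
          t.exists_ne_edges_mem_ends_of_isChain (List.isChain_cons.mp hred).2 hft hxf hxu hxb
        exact ⟨g₁, by simp [hg₁], g₂, by simp [hg₂], hne, hx₁, hx₂⟩

theorem exists_length_add_two_eq_of_not_isChain (hnd : ∀ e, ¬ (ends e).IsDiag) :
    ∀ {a b : V} (w : MGWalk ends a b), ¬ w.edges.IsChain (· ≠ ·) →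
      ∃ w' : MGWalk ends a b, w'.edges.length + 2 = w.edges.length
  | _, _, nil _, hred => absurd List.isChain_nil hred
  | _, _, cons e _ (nil _), hred => absurd (List.isChain_singleton e) hred
  | a, _, @cons _ _ _ _ u _ e h (cons e' h' t), hred => by
      rw [edges_cons, edges_cons, List.isChain_cons_cons, not_and_or, not_not] at hred
      rcases hred with rfl | hred
      · have hau : a ≠ u := fun hau => hnd e (by simp [h, hau])
        rw [h, Sym2.eq_iff] at h'
        obtain rfl := (h'.resolve_left (fun h'' => hau h''.1)).1
        exact ⟨t, by simp⟩
      · obtain ⟨t', ht'⟩ := exists_length_add_two_eq_of_not_isChain hnd (cons e' h' t) hred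
        exact ⟨cons e h t', by simp only [edges_cons, List.length_cons] at ht' ⊢; omega⟩

theorem exists_length_lt_of_not_nodup : ∀ {a b : V} (w : MGWalk ends a b), ¬ w.edges.Nodup →
    ∃ w' : MGWalk ends a b, w'.edges.length < w.edges.length
  | _, _, nil _, hw => absurd List.nodup_nil hw
  | a, _, cons e h t, hw => by
      rw [edges_cons, List.nodup_cons, not_and_or, not_not] at hw
      rcases hw with he | ht
      · obtain ⟨x, y, t₁, t₂, hxy, ht⟩ := t.exists_eq_append_cons_of_mem_edges he
        rw [h, Sym2.eq_iff] at hxy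
        rcases hxy with ⟨-, rfl⟩ | ⟨rfl, -⟩
        · exact ⟨cons e h t₂, by simp [ht]⟩
        · exact ⟨t₂, by simp [ht]; omega⟩
      · obtain ⟨t', ht'⟩ := t.exists_length_lt_of_not_nodup ht
        exact ⟨cons e h t', by simpa using ht'⟩

theorem exists_length_le_card [Fintype E] {a b : V} (w : MGWalk ends a b) :
    ∃ w' : MGWalk ends a b, w'.edges.length ≤ Fintype.card E := by
  induction hn : w.edges.length using Nat.strong_induction_on generalizing w with
  | _ n ih =>
    by_cases hw : w.edges.Nodup
    · exact ⟨w, hn ▸ hw.length_le_card⟩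
    · obtain ⟨w', hw'⟩ := w.exists_length_lt_of_not_nodup hw
      exact ih _ (hn ▸ hw') w' rfl

theorem exists_length_eq_add_two_mul {a b : V} {e : E} (he : b ∈ ends e)
    (w : MGWalk ends a b) (k : ℕ) :
    ∃ w' : MGWalk ends a b, w'.edges.length = w.edges.length + 2 * k := by
  induction k with
  | zero => exact ⟨w, rfl⟩
  | succ k ih =>
    obtain ⟨w', hw'⟩ := ih
    have h : ends e = s(b, Sym2.Mem.other he) := (Sym2.other_spec he).symm
    refine ⟨w'.append (cons e h (cons e (h.trans Sym2.eq_swap) (nil b))), ?_⟩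
    simp [hw']
    ring

theorem exists_length_eq_of_mod_two_eq {a b : V} {e : E} (he : b ∈ ends e)
    (w : MGWalk ends a b) {n : ℕ} (hn : w.edges.length ≤ n)
    (hpar : w.edges.length % 2 = n % 2) : ∃ w' : MGWalk ends a b, w'.edges.length = n := by
  obtain ⟨w', hw'⟩ := w.exists_length_eq_add_two_mul he ((n - w.edges.length) / 2)
  exact ⟨w', by omega⟩

section Potential

variable (pot : V → ℕ)

theorem le_add_length_edges (hpot : ∀ e x y, ends e = s(x, y) → pot y ≤ pot x + 1) :
    ∀ {a b : V} (w : MGWalk ends a b), pot b ≤ pot a + w.edges.length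
  | _, _, nil _ => by simp
  | _, _, cons e h t => by
      have := hpot e _ _ h
      have := le_add_length_edges hpot t
      simp only [edges_cons, List.length_cons]
      omega

theorem add_length_edges_mod_two {e₀ : E}
    (hpar : ∀ e x y, ends e = s(x, y) → e ≠ e₀ → (pot x + pot y) % 2 = 1) :
    ∀ {a b : V} (w : MGWalk ends a b), e₀ ∉ w.edges → (pot a + pot b + w.edges.length) % 2 = 0
  | _, _, nil _, _ => by simp; omega
  | _, _, cons e h t, he₀ => by
      simp only [edges_cons, List.mem_cons, not_or] at he₀
      have := hpar e _ _ h (Ne.symm he₀.1)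
      have := add_length_edges_mod_two hpar t he₀.2
      simp only [edges_cons, List.length_cons]
      omega

end Potential

end MGWalk

section Dynamics

variable {E V : Type} {ends : E → Sym2 V} {S : Set V}

variable (ends S) in
def reachedIncidences (P : ℕ → Prop) : Set (E × V) :=
  {q | q.2 ∈ ends q.1 ∧ ∃ v₀ ∈ S, ∃ w : MGWalk ends v₀ q.2, P w.edges.length}

theorem reachedIncidences_subset (P : ℕ → Prop) :
    reachedIncidences ends S P ⊆ {q | q.2 ∈ ends q.1} :=
  fun _ hq => hq.1

/-- With unit lengths the point on the arc leaving `x` along `e` sits at distance `t - ⌊t⌋`. -/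
theorem Npts_eq_ncard_reachedIncidences {l : E → ℝ} (hl : ∀ e, l e = 1) {t : ℝ} (ht : 0 ≤ t) :
    Npts ends l S t = (reachedIncidences ends S (· = ⌊t⌋₊)).ncard := by
  have hpoints : {p : E × V × ℝ | IsPoint ends l S t p.1 p.2.1 p.2.2}
      = (fun q : E × V => (q.1, q.2, t - ⌊t⌋₊)) '' reachedIncidences ends S (· = ⌊t⌋₊) := by
    ext ⟨e, x, s⟩
    simp only [IsPoint, reachedIncidences, hl, MGWalk.length_eq_length_edges hl,
      Set.mem_ofPred_eq, Set.mem_image, Prod.mk.injEq, Prod.exists]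
    constructor
    · rintro ⟨hx, hs₀, hs₁, v₀, hv₀, w, hw⟩
      have hfloor : ⌊t⌋₊ = w.edges.length := (Nat.floor_eq_iff ht).mpr ⟨by linarith, by linarith⟩
      exact ⟨e, x, ⟨hx, v₀, hv₀, w, hfloor.symm⟩, rfl, rfl, by rw [hfloor]; linarith⟩
    · rintro ⟨e, x, ⟨hx, v₀, hv₀, w, hw⟩, rfl, rfl, rfl⟩
      exact ⟨hx, by linarith [Nat.floor_le ht], by linarith [Nat.lt_floor_add_one t], v₀, hv₀,
        w, by rw [hw]; ring⟩
  rw [Npts, hpoints, Set.ncard_image_of_injective]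
  intro q q' h
  simp only [Prod.mk.injEq] at h
  exact Prod.ext h.1 h.2.1

theorem isStabBound_of_ncard_eq {l : E → ℝ} (hl : ∀ e, l e = 1) {B c : ℕ}
    (h : ∀ n ≥ B, (reachedIncidences ends S (· = n)).ncard = c) :
    IsStabBound ends l S B := by
  refine ⟨B.cast_nonneg, fun t ht => ?_⟩
  have ht₀ : 0 ≤ t := le_trans B.cast_nonneg ht
  rw [Npts_eq_ncard_reachedIncidences hl ht₀, Npts_eq_ncard_reachedIncidences hl B.cast_nonneg,
    Nat.floor_natCast, h _ (Nat.le_floor ht), h _ le_rfl]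

theorem stabTime_le {l : E → ℝ} {T : ℝ} (hT : IsStabBound ends l S T) : stabTime ends l S ≤ T :=
  csInf_le ⟨0, fun _ hT' => hT'.1⟩ hT

theorem le_stabTime {l : E → ℝ} {T t₁ t₂ : ℝ} (hT : IsStabBound ends l S T) (h₁₂ : t₁ ≤ t₂)
    (hne : Npts ends l S t₁ ≠ Npts ends l S t₂) : t₁ ≤ stabTime ends l S := by
  refine le_csInf ⟨T, hT⟩ fun T' hT' => ?_
  by_contra! h
  exact hne (by rw [hT'.2 t₁ h.le, hT'.2 t₂ (h.le.trans h₁₂)])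

/-- Moving each reached incidence `(e, x)` to the other end of `e` is injective. -/
theorem ncard_reachedIncidences_le [Finite E] [Finite V] {P Q : ℕ → Prop}
    (hPQ : ∀ k, P k → Q (k + 1)) :
    (reachedIncidences ends S P).ncard ≤ (reachedIncidences ends S Q).ncard := by
  classical
  let flip : E × V → E × V := fun q => if h : q.2 ∈ ends q.1 then (q.1, Sym2.Mem.other h) else q
  have hflip {e : E} {x : V} (hx : x ∈ ends e) : flip (e, x) = (e, Sym2.Mem.other hx) := dif_pos hx
  refine Set.ncard_le_ncard_of_injOn flip ?_ ?_
  · rintro ⟨e, x⟩ ⟨hx, v₀, hv₀, w, hw⟩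
    have h : ends e = s(x, Sym2.Mem.other hx) := (Sym2.other_spec hx).symm
    rw [hflip hx]
    exact ⟨Sym2.other_mem hx, v₀, hv₀, w.append (.cons e h (.nil _)), by simpa using hPQ _ hw⟩
  · rintro ⟨e, x⟩ ⟨hx, -⟩ ⟨e', x'⟩ ⟨hx', -⟩ hq
    rw [hflip hx, hflip hx', Prod.mk.injEq] at hq
    obtain ⟨rfl, hother⟩ := hq
    have hs : s(x, Sym2.Mem.other hx') = s(x', Sym2.Mem.other hx') := by
      rw [← hother, Sym2.other_spec hx, hother, Sym2.other_spec hx']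
    rw [Sym2.congr_left.mp hs]

theorem ncard_reachedIncidences_mod_two [Finite E] [Finite V] (n : ℕ) :
    (reachedIncidences ends S (· % 2 = n % 2)).ncard
      = (reachedIncidences ends S (· % 2 = 0)).ncard := by
  have hstep : ∀ n, (reachedIncidences ends S (· % 2 = n % 2)).ncard
      ≤ (reachedIncidences ends S (· % 2 = (n + 1) % 2)).ncard :=
    fun n => ncard_reachedIncidences_le fun k hk => by omega
  induction n with
  | zero => rfl
  | succ n ih =>
    have hperiod : reachedIncidences ends S (· % 2 = (n + 1 + 1) % 2)
        = reachedIncidences ends S (· % 2 = n % 2) := by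
      rw [Nat.add_assoc, Nat.add_mod_right]
    refine le_antisymm ?_ (ih ▸ hstep n)
    calc _ ≤ _ := hstep (n + 1)
      _ = _ := by rw [hperiod, ih]

end Dynamics

section Linear

variable {E V : Type} [Fintype E] {ends : E → Sym2 V}

open MGWalk

theorem isCycleSet_of_isChain (hdeg : ∀ x, degree ends x ≤ 2) {v : V} (w : MGWalk ends v v)
    (hw : w.edges ≠ []) (hred : w.edges.IsChain (· ≠ ·))
    (hv : ∃ g₁ ∈ w.edges, ∃ g₂ ∈ w.edges, g₁ ≠ g₂ ∧ v ∈ ends g₁ ∧ v ∈ ends g₂) :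
    IsCycleSet ends {f | f ∈ w.edges} := by
  refine ⟨List.exists_mem_of_ne_nil _ hw, ?_, fun x ⟨f, hf, hxf⟩ => ?_⟩
  · rintro a b ⟨fa, hfa, ha⟩ ⟨fb, hfb, hb⟩
    obtain ⟨pa, hpa⟩ := w.exists_walk_edges_subset_of_mem_ends hfa ha
    obtain ⟨pb, hpb⟩ := w.exists_walk_edges_subset_of_mem_ends hfb hb
    refine ⟨pa.reverse.append pb, fun g hg => ?_⟩
    simp only [edges_append, edges_reverse, List.mem_append, List.mem_reverse] at hg
    exact hg.elim (hpa g) (hpb g)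
  · have hle : edgeDegree ends {f | f ∈ w.edges} x ≤ 2 :=
      (Set.ncard_le_ncard fun g hg => hg.2).trans (hdeg x)
    obtain ⟨g₁, hg₁, g₂, hg₂, hne, hx₁, hx₂⟩ : ∃ g₁ ∈ w.edges, ∃ g₂ ∈ w.edges,
        g₁ ≠ g₂ ∧ x ∈ ends g₁ ∧ x ∈ ends g₂ := by
      by_cases hxv : x = v
      · exact hxv ▸ hv
      · exact w.exists_ne_edges_mem_ends_of_isChain hred hf hxf hxv hxv
    have hlt : 1 < edgeDegree ends {f | f ∈ w.edges} x :=
      (Set.one_lt_ncard_iff (Set.toFinite _)).mpr ⟨g₁, g₂, ⟨hg₁, hx₁⟩, ⟨hg₂, hx₂⟩, hne⟩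
    omega

/-- Unless a backtrack can be cancelled (one across the base point moves the base point), the
closed walk traces a cycle. -/
theorem exists_closed_length_add_two_eq_or_isCycleSet (hnd : ∀ e, ¬ (ends e).IsDiag)
    (hdeg : ∀ x, degree ends x ≤ 2) {v : V} (w : MGWalk ends v v) (hw : w.edges ≠ []) :
    (∃ (u : V) (w' : MGWalk ends u u), w'.edges.length + 2 = w.edges.length) ∨
      IsCycleSet ends {f | f ∈ w.edges} := by
  obtain ⟨u, e, t, h, hwt⟩ : ∃ (u : V) (e : E) (t : MGWalk ends u v),
      ends e = s(v, u) ∧ w.edges = e :: t.edges := by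
    cases w with
    | nil => exact absurd rfl hw
    | cons e h t => exact ⟨_, e, t, h, rfl⟩
  have hvu : v ≠ u := fun hvu => hnd e (by simp [h, hvu])
  obtain ⟨x, e', t', h', htt'⟩ := t.exists_eq_concat fun ht => hvu (eq_of_edges_eq_nil t ht).symm
  by_cases hee' : e' = e
  · subst hee'
    rw [h, Sym2.eq_iff] at h'
    obtain rfl : x = u := (h'.resolve_left fun h'' => hvu h''.2.symm).2.symm
    exact Or.inl ⟨x, t', by simp [hwt, htt']⟩
  by_cases hred : w.edges.IsChain (· ≠ ·)
  · refine Or.inr (isCycleSet_of_isChain hdeg w hw hred ⟨e, ?_, e', ?_, Ne.symm hee', ?_, ?_⟩)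
    · simp [hwt]
    · simp [hwt, htt']
    · simp [h]
    · simp [h']
  · obtain ⟨w', hw'⟩ := exists_length_add_two_eq_of_not_isChain hnd w hred
    exact Or.inl ⟨v, w', hw'⟩

theorem even_length_edges_of_isAcyclicG (hnd : ∀ e, ¬ (ends e).IsDiag)
    (hdeg : ∀ x, degree ends x ≤ 2) (hac : IsAcyclicG ends) {v : V} (w : MGWalk ends v v) :
    Even w.edges.length := by
  induction hn : w.edges.length using Nat.strong_induction_on generalizing v w with
  | _ n ih =>
    by_cases hw : w.edges = []
    · simp [← hn, hw]
    rcases exists_closed_length_add_two_eq_or_isCycleSet hnd hdeg w hw with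
      ⟨u, w', hw'⟩ | hcyc
    · obtain ⟨k, hk⟩ := ih _ (by omega) w' rfl
      exact ⟨k + 1, by omega⟩
    · exact absurd hcyc (hac _)

theorem length_edges_mod_two_eq_of_isAcyclicG (hnd : ∀ e, ¬ (ends e).IsDiag)
    (hdeg : ∀ x, degree ends x ≤ 2) (hac : IsAcyclicG ends) {a b : V} (w₁ w₂ : MGWalk ends a b) :
    w₁.edges.length % 2 = w₂.edges.length % 2 := by
  obtain ⟨k, hk⟩ := even_length_edges_of_isAcyclicG hnd hdeg hac (w₁.append w₂.reverse)
  simp only [edges_append, edges_reverse, List.length_append, List.length_reverse] at hk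
  omega

theorem reachedIncidences_eq_mod_two (hnd : ∀ e, ¬ (ends e).IsDiag)
    (hdeg : ∀ x, degree ends x ≤ 2) (hac : IsAcyclicG ends) {S : Set V} {n : ℕ}
    (hn : Fintype.card E ≤ n) :
    reachedIncidences ends S (· = n) = reachedIncidences ends S (· % 2 = n % 2) := by
  ext ⟨e, x⟩
  refine ⟨fun ⟨hx, v₀, hv₀, w, hw⟩ => ⟨hx, v₀, hv₀, w, by rw [hw]⟩,
    fun ⟨hx, v₀, hv₀, w, hw⟩ => ⟨hx, v₀, hv₀, ?_⟩⟩
  obtain ⟨w₀, hw₀⟩ := w.exists_length_le_card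
  exact w₀.exists_length_eq_of_mod_two_eq hx (hw₀.trans hn)
    ((length_edges_mod_two_eq_of_isAcyclicG hnd hdeg hac w₀ w).trans hw)

theorem stabTime_le_card_of_isAcyclicG {S : Set V} {l : E → ℝ}
    (hl : ∀ e, l e = 1) (hsys : IsDPSystem ends S) (hac : IsAcyclicG ends)
    (hdeg : ∀ x, degree ends x ≤ 2) : stabTime ends l S ≤ Fintype.card E := by
  have := hsys.1
  refine stabTime_le (isStabBound_of_ncard_eq (c := (reachedIncidences ends S (· % 2 = 0)).ncard)
    hl fun n hn => ?_)
  rw [reachedIncidences_eq_mod_two hsys.2.1 hdeg hac hn, ncard_reachedIncidences_mod_two]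

end Linear

section Tadpole

variable (m : ℕ)

def tadpoleVertex (k : ℕ) : Fin (m + 3) := ⟨min k (m + 2), by omega⟩

def tadpole (i : Fin (m + 3)) : Sym2 (Fin (m + 3)) :=
  if i.val < m + 2 then s(tadpoleVertex m i, tadpoleVertex m (i + 1))
  else s(tadpoleVertex m m, tadpoleVertex m (m + 2))

variable {m}

@[simp] theorem tadpoleVertex_val (x : Fin (m + 3)) : tadpoleVertex m x = x :=
  Fin.ext (by simp only [tadpoleVertex]; omega)

theorem tadpole_of_lt {k : ℕ} (hk : k < m + 2) :
    tadpole m ⟨k, by omega⟩ = s(tadpoleVertex m k, tadpoleVertex m (k + 1)) :=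
  if_pos hk

theorem tadpole_chord :
    tadpole m ⟨m + 2, by omega⟩ = s(tadpoleVertex m m, tadpoleVertex m (m + 2)) :=
  if_neg (lt_irrefl _)

theorem val_of_tadpole_eq {i x y : Fin (m + 3)} (h : tadpole m i = s(x, y)) :
    (i.val < m + 2 ∧ (x.val = i ∧ y.val = i + 1 ∨ x.val = i + 1 ∧ y.val = i)) ∨
      (i.val = m + 2 ∧ (x.val = m ∧ y.val = m + 2 ∨ x.val = m + 2 ∧ y.val = m)) := by
  have hval (k : ℕ) (z : Fin (m + 3)) (hz : tadpoleVertex m k = z) : z.val = min k (m + 2) :=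
    hz ▸ rfl
  have hi := i.isLt
  unfold tadpole at h
  split_ifs at h <;> rcases Sym2.eq_iff.mp h with ⟨hx, hy⟩ | ⟨hx, hy⟩ <;>
    have := hval _ _ hx <;> have := hval _ _ hy <;> omega

theorem tadpole_not_isDiag (i : Fin (m + 3)) : ¬ (tadpole m i).IsDiag := by
  unfold tadpole
  split_ifs <;> simp [tadpoleVertex, Fin.ext_iff]
  omega

theorem exists_walk_tadpoleVertex {k : ℕ} (hk : k ≤ m + 2) :
    ∃ w : MGWalk (tadpole m) (tadpoleVertex m 0) (tadpoleVertex m k), w.edges.length = k := by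
  induction k with
  | zero => exact ⟨.nil _, rfl⟩
  | succ k ih =>
    obtain ⟨w, hw⟩ := ih (by omega)
    exact ⟨w.append (.cons ⟨k, by omega⟩ (tadpole_of_lt (by omega)) (.nil _)), by simp [hw]⟩

theorem exists_walk_tadpole (x : Fin (m + 3)) :
    ∃ w : MGWalk (tadpole m) (tadpoleVertex m 0) x, w.edges.length = x := by
  have := exists_walk_tadpoleVertex (m := m) (k := x) (by omega)
  rwa [tadpoleVertex_val] at this

theorem isDPSystem_tadpole : IsDPSystem (tadpole m) {tadpoleVertex m 0} := by
  refine ⟨inferInstance, tadpole_not_isDiag, fun a b => ?_, Set.singleton_nonempty _⟩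
  obtain ⟨wa, -⟩ := exists_walk_tadpole a
  obtain ⟨wb, -⟩ := exists_walk_tadpole b
  exact ⟨wa.reverse.append wb⟩

/-- The handle is bipartite, so an odd closed walk at the free end has to use the edge
`{m + 1, m + 2}` of the triangle, at distance `m + 1` from the start. -/
theorem le_length_edges_of_odd (w : MGWalk (tadpole m) (tadpoleVertex m 0) (tadpoleVertex m 0))
    (hw : w.edges.length % 2 = 1) : 2 * m + 3 ≤ w.edges.length := by
  let pot : Fin (m + 3) → ℕ := fun x => min x.val (m + 1)
  have hpot₀ : pot (tadpoleVertex m 0) = 0 := by simp [pot, tadpoleVertex]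
  have hlip : ∀ e x y, tadpole m e = s(x, y) → pot y ≤ pot x + 1 := fun e x y h => by
    rcases val_of_tadpole_eq h with ⟨-, hxy⟩ | ⟨-, hxy⟩ <;> simp only [pot] <;> omega
  let e₀ : Fin (m + 3) := ⟨m + 1, by omega⟩
  have hpar : ∀ e x y, tadpole m e = s(x, y) → e ≠ e₀ → (pot x + pot y) % 2 = 1 :=
    fun e x y h he => by
      have he' : e.val ≠ m + 1 := fun h' => he (Fin.ext h')
      rcases val_of_tadpole_eq h with ⟨-, hxy⟩ | ⟨-, hxy⟩ <;> simp only [pot] <;> omega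
  have he₀ : e₀ ∈ w.edges := by
    by_contra he₀
    have := w.add_length_edges_mod_two pot hpar he₀
    omega
  obtain ⟨x, y, w₁, w₂, hxy, hw₁₂⟩ := w.exists_eq_append_cons_of_mem_edges he₀
  have hx := w₁.le_add_length_edges pot hlip
  have hy := w₂.reverse.le_add_length_edges pot hlip
  have hlen := congrArg List.length hw₁₂
  simp only [MGWalk.edges_reverse, List.length_reverse, List.length_append,
    List.length_cons] at hy hlen
  rcases val_of_tadpole_eq hxy with ⟨-, hxy⟩ | ⟨h, -⟩ <;> simp only [e₀, pot] at * <;> omega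

theorem reachedIncidences_tadpole {n : ℕ} (hn : 3 * m + 5 ≤ n) :
    reachedIncidences (tadpole m) {tadpoleVertex m 0} (· = n) = {q | q.2 ∈ tadpole m q.1} := by
  refine (reachedIncidences_subset _).antisymm fun ⟨e, x⟩ hx => ⟨hx, _, rfl, ?_⟩
  obtain ⟨p, hp⟩ := exists_walk_tadpole x
  obtain ⟨pm, hpm⟩ := exists_walk_tadpoleVertex (m := m) (k := m) (by omega)
  obtain ⟨pm₂, hpm₂⟩ := exists_walk_tadpoleVertex (m := m) (k := m + 2) le_rfl
  let q := pm₂.append (.cons _ (tadpole_chord.trans Sym2.eq_swap) pm.reverse) |>.append p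
  have hq : q.edges.length = 2 * m + 3 + x := by simp [q, hpm, hpm₂, hp]; omega
  by_cases hpar : x.val % 2 = n % 2
  · exact p.exists_length_eq_of_mod_two_eq hx (by omega) (hp ▸ hpar)
  · exact q.exists_length_eq_of_mod_two_eq hx (by omega) (by omega)

theorem le_stabTime_tadpole {l : Fin (m + 3) → ℝ} (hl : ∀ e, l e = 1) :
    (2 * m + 1 : ℝ) ≤ stabTime (tadpole m) l {tadpoleVertex m 0} := by
  have hbound : IsStabBound (tadpole m) l {tadpoleVertex m 0} (3 * m + 5 : ℕ) :=
    isStabBound_of_ncard_eq hl fun n hn => by rw [reachedIncidences_tadpole hn]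
  have hlt : Npts (tadpole m) l {tadpoleVertex m 0} (2 * m + 1 : ℕ)
      < Npts (tadpole m) l {tadpoleVertex m 0} (3 * m + 5 : ℕ) := by
    rw [Npts_eq_ncard_reachedIncidences hl (Nat.cast_nonneg _),
      Npts_eq_ncard_reachedIncidences hl (Nat.cast_nonneg _), Nat.floor_natCast,
      Nat.floor_natCast, reachedIncidences_tadpole le_rfl]
    refine Set.ncard_lt_ncard ⟨reachedIncidences_subset _, fun hsub => ?_⟩
    have hstart : tadpoleVertex m 0 ∈ tadpole m ⟨0, by omega⟩ := by
      rw [tadpole_of_lt (by omega)]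
      exact Sym2.mem_mk_left _ _
    obtain ⟨-, v₀, rfl, w, hw⟩ := hsub (a := (⟨0, by omega⟩, tadpoleVertex m 0)) hstart
    have := le_length_edges_of_odd w (by omega)
    omega
  exact_mod_cast le_stabTime hbound (Nat.cast_le.mpr (by omega)) hlt.ne

end Tadpole

/-- for every real `C` there is a finite edge set `E` of unit-length
edges and a DP-system assembled from `E` whose stabilization time exceeds by more
than `C` the stabilization time of every DP-system on a linear (path) metric
graph assembled from `E`. -/
theorem stmt14 (C : ℝ) :
    ∃ (E : Type) (_ : Fintype E) (l : E → ℕ),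
      (∀ e : E, l e = 1) ∧
      ∃ (V : Type) (ends : E → Sym2 V) (S : Set V),
        IsDPSystem ends S ∧
        ∀ (V' : Type) (ends' : E → Sym2 V') (S' : Set V'),
          IsDPSystem ends' S' → IsAcyclicG ends' →
          (∀ x : V', degree ends' x ≤ 2) →
          stabTime ends' (fun e => (l e : ℝ)) S' + C
            < stabTime ends (fun e => (l e : ℝ)) S := by
  let m := ⌈C⌉₊ + 3
  refine ⟨Fin (m + 3), inferInstance, fun _ => 1, fun _ => rfl, Fin (m + 3), tadpole m,
    {tadpoleVertex m 0}, isDPSystem_tadpole, fun V' ends' S' hsys hac hdeg => ?_⟩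
  simp only [Nat.cast_one]
  have hl : ∀ _ : Fin (m + 3), (1 : ℝ) = 1 := fun _ => rfl
  have hlinear := stabTime_le_card_of_isAcyclicG hl hsys hac hdeg
  have htadpole := le_stabTime_tadpole hl
  have hC := Nat.le_ceil C
  simp only [Fintype.card_fin, m] at hlinear htadpole
  push_cast at hlinear htadpole
  linarith
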